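/- arXiv:1905.01117 — 7 statements merged into one kernel-verified Lean document; each statement's English description precedes it below -/
import Mathlib

section
/- Let X be a complex Hilbert space and H₀ : D(H₀) ⊆ X → X a densely defined, closed, skew-symmetric operator (⟨H₀x, y⟩ = −⟨x, H₀y⟩ for all x, y ∈ D(H₀)). Let G₁, G₂ be complex Hilbert spaces and F : Graph(H₀*) → G₁ ⊕ G₂ a surjective linear map, written F(x, H₀*x) = (F₁x, F₂x), such that ⟨x, H₀*y⟩_X + ⟨H₀*x, y⟩_X = ⟨F₁x, F₁y⟩_{G₁} − ⟨F₂x, F₂y⟩_{G₂} for all x, y ∈ D(H₀*). Then a linear operator H with −H₀ ⊆ H ⊆ H₀* is maximal dissipative if and only if there exists a linear contraction T : G₂ → G₁ (i.e., ‖Tz‖_{G₁} ≤ ‖z‖_{G₂} for all z) such that D(H) = {x ∈ D(H₀*) : F₁x = T F₂x}. -/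
open scoped InnerProductSpace

variable {X : Type*} [NormedAddCommGroup X] [InnerProductSpace ℂ X] [CompleteSpace X]

/-- A (partially defined) linear operator `H` in a complex Hilbert space is *dissipative*
if `Re ⟪H x, x⟫ ≤ 0` for all `x` in its domain. -/
def IsDissipative (H : X →ₗ.[ℂ] X) : Prop :=
  ∀ x : H.domain, (⟪H x, (x : X)⟫_ℂ).re ≤ 0

/-- A dissipative operator is *maximal dissipative* if every dissipative extension of it
coincides with it. -/
def IsMaximalDissipative (H : X →ₗ.[ℂ] X) : Prop :=
  IsDissipative H ∧ ∀ K : X →ₗ.[ℂ] X, IsDissipative K → H ≤ K → K = H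

/-!
The boundary identity gives `2 Re ⟪H₀* x, x⟫ = ‖F₁ x‖² - ‖F₂ x‖²`, so a restriction of `H₀*` is
dissipative exactly when `‖F₁ x‖ ≤ ‖F₂ x‖` on its domain. For maximal dissipative `H` this bound
makes `F₂ x ↦ F₁ x` a well-defined contraction on the range of `F₂`; extend it to the closure and
precompose with the orthogonal projection to get `T`. The restriction of `H₀*` to `{F₁ = T F₂}` is
a dissipative extension of `H`, hence equals it.

Conversely, a dissipative extension `K` of `-H₀` lies below `H₀*`: since `Re ⟪K v, v⟫ = 0` for
`v ∈ D(H₀)`, dissipativity on `x + t v` for all `t ∈ ℂ` forces `⟪K v, x⟫ = -⟪v, K x⟫`. If moreover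
`K` extends the restriction `H` of `H₀*` to `{F₁ = T F₂}`, then for `x ∈ D(K)` surjectivity of `F`
yields `y ∈ D(H)` with `F₂ (x + y) = 0`; dissipativity of `K` at `x + y` gives `F₁ (x + y) = 0`,
so `x` satisfies the boundary condition.
-/

open scoped ComplexConjugate

theorem Complex.eq_zero_of_forall_re_mul_le {w : ℂ} {C : ℝ} (h : ∀ t : ℂ, (t * w).re ≤ C) :
    w = 0 := by
  by_contra hw
  have h' := h ((C + 1) / w)
  rw [div_mul_cancel₀ _ hw] at h'
  norm_num at h'

theorem LinearMap.exists_opNorm_le_one_apply_eq {𝕜 V E F : Type*} [RCLike 𝕜]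
    [AddCommGroup V] [Module 𝕜 V] [NormedAddCommGroup E] [InnerProductSpace 𝕜 E] [CompleteSpace E]
    [NormedAddCommGroup F] [NormedSpace 𝕜 F] [CompleteSpace F]
    (Φ : V →ₗ[𝕜] F) (Ψ : V →ₗ[𝕜] E) (h : ∀ v, ‖Φ v‖ ≤ ‖Ψ v‖) :
    ∃ T : E →L[𝕜] F, ‖T‖ ≤ 1 ∧ ∀ v, T (Ψ v) = Φ v := by
  set N := (range Ψ).topologicalClosure
  let e : V →ₗ[𝕜] N :=
    Ψ.codRestrict N fun v => (range Ψ).le_topologicalClosure (mem_range_self Ψ v)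
  have he : DenseRange e := by
    rw [DenseRange, Subtype.dense_iff, ← Set.range_comp]
    exact (Submodule.topologicalClosure_coe _).le
  have hΦe : ∀ v, ‖Φ v‖ ≤ 1 * ‖e v‖ := fun v => (one_mul ‖e v‖).symm ▸ h v
  refine ⟨(Φ.extendOfNorm e).comp N.orthogonalProjectionOnto, ?_, fun v => ?_⟩
  · calc _ ≤ ‖Φ.extendOfNorm e‖ * ‖N.orthogonalProjectionOnto‖ :=
          ContinuousLinearMap.opNorm_comp_le _ _
      _ ≤ 1 * 1 := by
        gcongr
        · exact opNorm_extendOfNorm_le he zero_le_one hΦe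
        · exact N.orthogonalProjectionOnto_norm_le
      _ = 1 := one_mul 1
  · have hPΨ : N.orthogonalProjectionOnto (Ψ v) = e v :=
      N.orthogonalProjectionOnto_mem_subspace_eq_self (e v)
    rw [ContinuousLinearMap.comp_apply, hPΨ, extendOfNorm_eq he ⟨1, hΦe⟩]

theorem LinearPMap.le_of_le_of_domain_le {R E F : Type*} [Ring R] [AddCommGroup E] [Module R E]
    [AddCommGroup F] [Module R F] {S S' A : E →ₗ.[R] F} (hS : S ≤ A) (hS' : S' ≤ A)
    (h : S.domain ≤ S'.domain) : S ≤ S' :=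
  ⟨h, fun x y hxy => (hS.2 (y := ⟨x, hS.1 x.2⟩) rfl).trans (hS'.2 (x := y) hxy.symm).symm⟩

section Dissipative

variable {E : Type*} [NormedAddCommGroup E] [InnerProductSpace ℂ E]

theorem IsDissipative.inner_apply_eq_neg_of_re_eq_zero {K : E →ₗ.[ℂ] E} (hK : IsDissipative K)
    {y : K.domain} (hy : (⟪K y, (y : E)⟫_ℂ).re = 0) (x : K.domain) :
    ⟪K y, (x : E)⟫_ℂ = -⟪(y : E), K x⟫_ℂ := by
  rw [eq_neg_iff_add_eq_zero]
  refine Complex.eq_zero_of_forall_re_mul_le (C := -(⟪K x, (x : E)⟫_ℂ).re) fun s => ?_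
  have h := hK (x + conj s • y)
  rw [K.map_add, K.map_smul, Submodule.coe_add, Submodule.coe_smul, inner_add_left,
    inner_add_right, inner_add_right, inner_smul_left, inner_smul_left, inner_smul_right,
    inner_smul_right, ← inner_conj_symm (K x) (y : E)] at h
  simp only [Complex.conj_conj, Complex.add_re, Complex.add_im, Complex.mul_re, Complex.mul_im,
    Complex.conj_re, Complex.conj_im, hy] at h ⊢
  linarith

theorem re_inner_apply_self_eq_zero_of_skew {H₀ : E →ₗ.[ℂ] E}
    (hskew : ∀ x y : H₀.domain, ⟪H₀ x, (y : E)⟫_ℂ = -⟪(x : E), H₀ y⟫_ℂ) (v : H₀.domain) :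
    (⟪H₀ v, (v : E)⟫_ℂ).re = 0 := by
  have h := congrArg Complex.re (hskew v v)
  rw [Complex.neg_re, ← inner_conj_symm (v : E), Complex.conj_re] at h
  linarith

end Dissipative

theorem IsDissipative.le_adjoint_of_neg_le {H₀ K : X →ₗ.[ℂ] X} (hK : IsDissipative K)
    (hdense : Dense (H₀.domain : Set X))
    (hskew : ∀ x y : H₀.domain, ⟪H₀ x, (y : X)⟫_ℂ = -⟪(x : X), H₀ y⟫_ℂ) (hK₀ : -H₀ ≤ K) :
    K ≤ H₀.adjoint := by
  refine LinearPMap.IsFormalAdjoint.le_adjoint hdense fun v x => ?_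
  let vK : K.domain := ⟨v, hK₀.1 v.2⟩
  have hKv : K vK = -H₀ v := by
    rw [← hK₀.2 (x := v) (y := vK) rfl, LinearPMap.neg_apply]
  have hre : (⟪K vK, (vK : X)⟫_ℂ).re = 0 := by
    rw [hKv, inner_neg_left, Complex.neg_re, re_inner_apply_self_eq_zero_of_skew hskew v, neg_zero]
  have h := hK.inner_apply_eq_neg_of_re_eq_zero hre x
  rw [hKv, inner_neg_left, neg_inj] at h
  exact h

section BoundarySystem

variable {E G₁ G₂ : Type*} [NormedAddCommGroup E] [InnerProductSpace ℂ E]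
  [NormedAddCommGroup G₁] [InnerProductSpace ℂ G₁] [NormedAddCommGroup G₂] [InnerProductSpace ℂ G₂]
  {A : E →ₗ.[ℂ] E} {F₁ : A.domain →ₗ[ℂ] G₁} {F₂ : A.domain →ₗ[ℂ] G₂}

theorem two_mul_re_inner_apply_self_eq
    (hbs : ∀ x y : A.domain,
      ⟪(x : E), A y⟫_ℂ + ⟪A x, (y : E)⟫_ℂ = ⟪F₁ x, F₁ y⟫_ℂ - ⟪F₂ x, F₂ y⟫_ℂ)
    (x : A.domain) : 2 * (⟪A x, (x : E)⟫_ℂ).re = ‖F₁ x‖ ^ 2 - ‖F₂ x‖ ^ 2 := by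
  have h := congrArg (RCLike.re (K := ℂ)) (hbs x x)
  rw [map_add, map_sub, inner_re_symm (𝕜 := ℂ) (x : E), inner_self_eq_norm_sq,
    inner_self_eq_norm_sq, RCLike.re_to_complex] at h
  linarith

variable (F₁ F₂) in
def boundaryDomain (T : G₂ →ₗ[ℂ] G₁) : Submodule ℂ E :=
  (LinearMap.ker (F₁ - T ∘ₗ F₂)).map A.domain.subtype

theorem mem_boundaryDomain {T : G₂ →ₗ[ℂ] G₁} {u : E} :
    u ∈ boundaryDomain F₁ F₂ T ↔ ∃ hu : u ∈ A.domain, F₁ ⟨u, hu⟩ = T (F₂ ⟨u, hu⟩) := by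
  simp [boundaryDomain, sub_eq_zero]

theorem boundaryDomain_le (T : G₂ →ₗ[ℂ] G₁) : boundaryDomain F₁ F₂ T ≤ A.domain :=
  Submodule.map_subtype_le _ _

variable (hF : ∀ x : A.domain, 2 * (⟪A x, (x : E)⟫_ℂ).re = ‖F₁ x‖ ^ 2 - ‖F₂ x‖ ^ 2)
include hF

theorem isDissipative_iff_norm_le_of_le {S : E →ₗ.[ℂ] E} (hSA : S ≤ A) :
    IsDissipative S ↔ ∀ x : S.domain,
      ‖F₁ (Submodule.inclusion hSA.1 x)‖ ≤ ‖F₂ (Submodule.inclusion hSA.1 x)‖ := by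
  refine forall_congr' fun x => ?_
  have hx := hF (Submodule.inclusion hSA.1 x)
  rw [← hSA.2 rfl, Submodule.coe_inclusion] at hx
  rw [← sq_le_sq₀ (norm_nonneg _) (norm_nonneg _)]
  constructor <;> intro h <;> linarith

theorem boundary_condition_of_isDissipative
    (hsurj : Function.Surjective fun x : A.domain => (F₁ x, F₂ x)) {T : G₂ →ₗ[ℂ] G₁}
    {K : E →ₗ.[ℂ] E} (hKA : K ≤ A) (hK : IsDissipative K)
    (hTK : ∀ y : A.domain, F₁ y = T (F₂ y) → (y : E) ∈ K.domain)
    (x : A.domain) (hx : (x : E) ∈ K.domain) : F₁ x = T (F₂ x) := by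
  obtain ⟨y, hy⟩ := hsurj (T (-F₂ x), -F₂ x)
  have hy₁ : F₁ y = T (-F₂ x) := congrArg Prod.fst hy
  have hy₂ : F₂ y = -F₂ x := congrArg Prod.snd hy
  have hyK : (y : E) ∈ K.domain := hTK y (by rw [hy₁, hy₂])
  have hxy : ‖F₁ (x + y)‖ ≤ ‖F₂ (x + y)‖ :=
    (isDissipative_iff_norm_le_of_le hF hKA).1 hK (⟨x, hx⟩ + ⟨y, hyK⟩)
  rw [map_add, map_add, hy₁, hy₂, add_neg_cancel, norm_zero, norm_le_zero_iff, map_neg,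
    add_neg_eq_zero] at hxy
  exact hxy

theorem isMaximalDissipative_of_domain_iff
    (hsurj : Function.Surjective fun x : A.domain => (F₁ x, F₂ x)) {T : G₂ →ₗ[ℂ] G₁}
    (hT : ∀ z, ‖T z‖ ≤ ‖z‖) {S : E →ₗ.[ℂ] E} (hSA : S ≤ A)
    (hS : ∀ u, u ∈ S.domain ↔ ∃ hu : u ∈ A.domain, F₁ ⟨u, hu⟩ = T (F₂ ⟨u, hu⟩))
    (hext : ∀ K, IsDissipative K → S ≤ K → K ≤ A) : IsMaximalDissipative S := by
  refine ⟨(isDissipative_iff_norm_le_of_le hF hSA).2 fun x => ?_, fun K hK hSK => ?_⟩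
  · obtain ⟨_, hx⟩ := (hS x).1 x.2
    exact hx ▸ hT _
  · have hKA := hext K hK hSK
    refine le_antisymm (LinearPMap.le_of_le_of_domain_le hKA hSA fun u hu => ?_) hSK
    exact (hS u).2 ⟨hKA.1 hu, boundary_condition_of_isDissipative hF hsurj hKA hK
      (fun y hy => hSK.1 ((hS y).2 ⟨y.2, hy⟩)) ⟨u, hKA.1 hu⟩ hu⟩

theorem exists_contraction_of_isMaximalDissipative [CompleteSpace G₁] [CompleteSpace G₂]
    {S : E →ₗ.[ℂ] E} (hSA : S ≤ A) (hS : IsMaximalDissipative S) :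
    ∃ T : G₂ →ₗ[ℂ] G₁, (∀ z, ‖T z‖ ≤ ‖z‖) ∧
      ∀ u, u ∈ S.domain ↔ ∃ hu : u ∈ A.domain, F₁ ⟨u, hu⟩ = T (F₂ ⟨u, hu⟩) := by
  obtain ⟨T, hT, hTF⟩ := LinearMap.exists_opNorm_le_one_apply_eq
    (F₁ ∘ₗ Submodule.inclusion hSA.1) (F₂ ∘ₗ Submodule.inclusion hSA.1)
    ((isDissipative_iff_norm_le_of_le hF hSA).1 hS.1)
  have hTz : ∀ z, ‖T z‖ ≤ ‖z‖ := fun z => (T.le_of_opNorm_le hT z).trans_eq (one_mul _)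
  set S' := A.domRestrict (boundaryDomain F₁ F₂ (T : G₂ →ₗ[ℂ] G₁))
  have hS'dom : S'.domain = boundaryDomain F₁ F₂ (T : G₂ →ₗ[ℂ] G₁) :=
    inf_eq_left.2 (boundaryDomain_le _)
  have hS'A : S' ≤ A := LinearPMap.domRestrict_le
  have hS' : IsDissipative S' := (isDissipative_iff_norm_le_of_le hF hS'A).2 fun x => by
    obtain ⟨_, hx⟩ := mem_boundaryDomain.1 (hS'dom.le x.2)
    exact (congrArg norm hx).trans_le (hTz _)
  have hSS' : S ≤ S' := LinearPMap.le_of_le_of_domain_le hSA hS'A fun u hu =>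
    hS'dom.ge (mem_boundaryDomain.2 ⟨hSA.1 hu, (hTF ⟨u, hu⟩).symm⟩)
  refine ⟨T, hTz, fun u => ?_⟩
  rw [← hS.2 S' hS' hSS', hS'dom, mem_boundaryDomain]

end BoundarySystem

theorem stmt_0_general {G₁ G₂ : Type*}
    [NormedAddCommGroup G₁] [InnerProductSpace ℂ G₁] [CompleteSpace G₁]
    [NormedAddCommGroup G₂] [InnerProductSpace ℂ G₂] [CompleteSpace G₂]
    (H₀ : X →ₗ.[ℂ] X) (hdense : Dense (H₀.domain : Set X))
    (hskew : ∀ x y : H₀.domain, ⟪H₀ x, (y : X)⟫_ℂ = -⟪(x : X), H₀ y⟫_ℂ)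
    (F₁ : H₀.adjoint.domain →ₗ[ℂ] G₁) (F₂ : H₀.adjoint.domain →ₗ[ℂ] G₂)
    (hsurj : Function.Surjective fun x : H₀.adjoint.domain => (F₁ x, F₂ x))
    (hbs : ∀ x y : H₀.adjoint.domain,
      ⟪(x : X), H₀.adjoint y⟫_ℂ + ⟪H₀.adjoint x, (y : X)⟫_ℂ
        = ⟪F₁ x, F₁ y⟫_ℂ - ⟪F₂ x, F₂ y⟫_ℂ)
    (H : X →ₗ.[ℂ] X) (hext : -H₀ ≤ H) (hrest : H ≤ H₀.adjoint) :
    IsMaximalDissipative H ↔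
      ∃ T : G₂ →ₗ[ℂ] G₁, (∀ z : G₂, ‖T z‖ ≤ ‖z‖) ∧
        ∀ u : X, u ∈ H.domain ↔
          ∃ hu : u ∈ H₀.adjoint.domain, F₁ ⟨u, hu⟩ = T (F₂ ⟨u, hu⟩) := by
  have hF := two_mul_re_inner_apply_self_eq hbs
  refine ⟨exists_contraction_of_isMaximalDissipative hF hrest, ?_⟩
  rintro ⟨T, hT, hdom⟩
  exact isMaximalDissipative_of_domain_iff hF hsurj hT hrest hdom fun K hK hHK =>
    hK.le_adjoint_of_neg_le hdense hskew (hext.trans hHK)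

/-- **classification of maximal dissipative extensions via boundary systems.**
Let `H₀` be a densely defined, closed, skew-symmetric operator in a complex Hilbert space
`X`, let `G₁, G₂` be complex Hilbert spaces and let `F = (F₁, F₂)` be a surjective linear
map on the graph of `H₀*` (identified with the domain of `H₀*`) satisfying the boundary
system identity
`⟪x, H₀* y⟫ + ⟪H₀* x, y⟫ = ⟪F₁ x, F₁ y⟫ − ⟪F₂ x, F₂ y⟫`.
Then a linear operator `H` with `−H₀ ⊆ H ⊆ H₀*` is maximal dissipative if and only if
there is a linear contraction `T : G₂ → G₁` with
`D(H) = {x ∈ D(H₀*) : F₁ x = T (F₂ x)}`. -/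
theorem stmt_0 {G₁ G₂ : Type*}
    [NormedAddCommGroup G₁] [InnerProductSpace ℂ G₁] [CompleteSpace G₁]
    [NormedAddCommGroup G₂] [InnerProductSpace ℂ G₂] [CompleteSpace G₂]
    (H₀ : X →ₗ.[ℂ] X) (hdense : Dense (H₀.domain : Set X)) (hclosed : H₀.IsClosed)
    (hskew : ∀ x y : H₀.domain, ⟪H₀ x, (y : X)⟫_ℂ = -⟪(x : X), H₀ y⟫_ℂ)
    (F₁ : H₀.adjoint.domain →ₗ[ℂ] G₁) (F₂ : H₀.adjoint.domain →ₗ[ℂ] G₂)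
    (hsurj : Function.Surjective fun x : H₀.adjoint.domain => (F₁ x, F₂ x))
    (hbs : ∀ x y : H₀.adjoint.domain,
      ⟪(x : X), H₀.adjoint y⟫_ℂ + ⟪H₀.adjoint x, (y : X)⟫_ℂ
        = ⟪F₁ x, F₁ y⟫_ℂ - ⟪F₂ x, F₂ y⟫_ℂ)
    (H : X →ₗ.[ℂ] X) (hext : -H₀ ≤ H) (hrest : H ≤ H₀.adjoint) :
    IsMaximalDissipative H ↔
      ∃ T : G₂ →ₗ[ℂ] G₁, (∀ z : G₂, ‖T z‖ ≤ ‖z‖) ∧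
        ∀ u : X, u ∈ H.domain ↔
          ∃ hu : u ∈ H₀.adjoint.domain, F₁ ⟨u, hu⟩ = T (F₂ ⟨u, hu⟩) :=
  stmt_0_general H₀ hdense hskew F₁ F₂ hsurj hbs H hext hrest
end

section
/- Let X be a complex Hilbert space and H : D(H) ⊆ X → X a linear, densely defined, maximal dissipative operator. If (x, y) ∈ X × X satisfies Re⟨x − u, y − Hu⟩ ≤ 0 for all u ∈ D(H), then x ∈ D(H) and y = Hx. -/
/-!
If `x ∉ D(H)`, extend `H` by `x ↦ y`. The extension is still dissipative: for `c ≠ 0` and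
`v = -c⁻¹ u` one has `Re ⟪H u + c y, u + c x⟫ = |c|² Re ⟪x - v, y - H v⟫ ≤ 0`, contradicting
maximality. Once `x ∈ D(H)`, testing the hypothesis at `u = x - t v` gives
`t Re ⟪v, y - H x⟫ + t² Re ⟪v, H v⟫ ≤ 0` for all real `t`, so `Re ⟪v, y - H x⟫ = 0` on the dense
domain, whence `y = H x`.
-/

open scoped InnerProductSpace

variable {X : Type*} [NormedAddCommGroup X] [InnerProductSpace ℂ X] [CompleteSpace X]

theorem eq_zero_of_forall_mul_add_sq_mul_nonpos {a b : ℝ}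
    (h : ∀ t : ℝ, t * a + t ^ 2 * b ≤ 0) : a = 0 := by
  have hdiscr := discrim_le_zero (a := -b) (b := -a) (c := 0) fun t => by nlinarith [h t]
  rw [discrim] at hdiscr
  nlinarith [sq_nonneg a]

section RCLike

variable {𝕜 E : Type*} [RCLike 𝕜] [NormedAddCommGroup E] [InnerProductSpace 𝕜 E]

theorem Dense.eq_zero_of_forall_re_inner_eq_zero {s : Set E} (hs : Dense s) {z : E}
    (h : ∀ v ∈ s, RCLike.re ⟪v, z⟫_𝕜 = 0) : z = 0 := by
  have hre : (fun v => RCLike.re ⟪v, z⟫_𝕜) = fun _ => 0 :=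
    Continuous.ext_on hs (by fun_prop) continuous_const h
  exact re_inner_self_nonpos.1 (congrFun hre z).le

theorem LinearPMap.re_inner_sub_apply_eq_zero (H : E →ₗ.[𝕜] E) {x y : E} (hx : x ∈ H.domain)
    (hxy : ∀ u : H.domain, RCLike.re ⟪x - u, y - H u⟫_𝕜 ≤ 0) (v : H.domain) :
    RCLike.re ⟪(v : E), y - H ⟨x, hx⟩⟫_𝕜 = 0 := by
  refine eq_zero_of_forall_mul_add_sq_mul_nonpos (b := RCLike.re ⟪(v : E), H v⟫_𝕜) fun t => ?_
  have ht := hxy (⟨x, hx⟩ - (t : 𝕜) • v)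
  rw [map_sub H, H.map_smul] at ht
  simp only [Submodule.coe_sub, Submodule.coe_smul, sub_sub_cancel, sub_sub_eq_add_sub,
    add_sub_right_comm, inner_smul_left, inner_add_right, inner_smul_right,
    RCLike.conj_ofReal] at ht
  simpa [mul_add, ← mul_assoc, sq, RCLike.re_ofReal_mul] using ht

end RCLike

section Dissipative

variable {E : Type*} [NormedAddCommGroup E] [InnerProductSpace ℂ E]

theorem IsDissipative.supSpanSingleton {H : E →ₗ.[ℂ] E} (hH : IsDissipative H) {x y : E}
    (hx : x ∉ H.domain) (hxy : ∀ u : H.domain, (⟪x - u, y - H u⟫_ℂ).re ≤ 0) :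
    IsDissipative (H.supSpanSingleton x y hx) := by
  rintro ⟨w, hw⟩
  rw [LinearPMap.domain_supSpanSingleton] at hw
  obtain ⟨u, hu, _, hcx, rfl⟩ := Submodule.mem_sup.1 hw
  obtain ⟨c, rfl⟩ := Submodule.mem_span_singleton.1 hcx
  rw [LinearPMap.supSpanSingleton_apply_mk]
  rcases eq_or_ne c 0 with rfl | hc
  · simpa using hH ⟨u, hu⟩
  set v : H.domain := -c⁻¹ • ⟨u, hu⟩
  have hdom : u + c • x = c • (x - v) := by
    rw [show (v : E) = -c⁻¹ • u from rfl, smul_sub, smul_smul, mul_neg, mul_inv_cancel₀ hc,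
      neg_smul, one_smul, sub_neg_eq_add, add_comm]
  have hran : H ⟨u, hu⟩ + c • y = c • (y - H v) := by
    rw [show H v = -c⁻¹ • H ⟨u, hu⟩ from H.map_smul _ _, smul_sub, smul_smul, mul_neg,
      mul_inv_cancel₀ hc, neg_smul, one_smul, sub_neg_eq_add, add_comm]
  show (⟪H ⟨u, hu⟩ + c • y, u + c • x⟫_ℂ).re ≤ 0
  rw [hdom, hran, inner_smul_left, inner_smul_right, ← mul_assoc, Complex.conj_mul',
    ← Complex.ofReal_pow, Complex.re_ofReal_mul]
  exact mul_nonpos_of_nonneg_of_nonpos (by positivity)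
    ((inner_re_symm (𝕜 := ℂ) _ _).trans_le (hxy v))

theorem IsMaximalDissipative.mem_domain_of_forall_re_inner_nonpos {H : E →ₗ.[ℂ] E}
    (hH : IsMaximalDissipative H) {x y : E}
    (hxy : ∀ u : H.domain, (⟪x - u, y - H u⟫_ℂ).re ≤ 0) : x ∈ H.domain := by
  by_contra hx
  have hext := hH.2 _ (hH.1.supSpanSingleton hx hxy) (LinearPMap.left_le_sup _ _ _)
  refine hx (hext ▸ ?_)
  rw [LinearPMap.domain_supSpanSingleton]
  exact Submodule.mem_sup_right (Submodule.mem_span_singleton_self x)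

end Dissipative

/-- If `H` is a linear, densely defined, maximal dissipative operator in a
complex Hilbert space `X` and `(x, y) ∈ X × X` satisfies `Re ⟪x − u, y − H u⟫ ≤ 0` for all
`u ∈ D(H)`, then `x ∈ D(H)` and `y = H x`. -/
theorem stmt_1 (H : X →ₗ.[ℂ] X) (hdense : Dense (H.domain : Set X))
    (hmax : IsMaximalDissipative H) (x y : X)
    (hxy : ∀ u : H.domain, (⟪x - (u : X), y - H u⟫_ℂ).re ≤ 0) :
    ∃ hx : x ∈ H.domain, H ⟨x, hx⟩ = y := by
  have hx := hmax.mem_domain_of_forall_re_inner_nonpos hxy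
  refine ⟨hx, (sub_eq_zero.1 ?_).symm⟩
  exact hdense.eq_zero_of_forall_re_inner_eq_zero fun v hv =>
    H.re_inner_sub_apply_eq_zero hx hxy ⟨v, hv⟩
end

section
/- (Minty's theorem for linear operators) Let X be a complex Hilbert space and H : D(H) ⊆ X → X linear, densely defined and dissipative. Then H is maximal dissipative if and only if 1 − H is onto, i.e., for every y ∈ X there exists x ∈ D(H) with x − Hx = y. -/
/-!
If `1 - H` is onto, a dissipative extension `K` of `H` has injective `1 - K`, since
`‖x‖ ≤ ‖x - K x‖`, and this forces `K = H`. Conversely, let `H` be maximal dissipative. A vector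
`z` orthogonal to the range of `1 - H` would give the dissipative extension `x + c z ↦ H x - c z`,
so that range is dense. The closure of the graph of a densely defined dissipative operator is the
graph of a dissipative operator, so by maximality `H` is closed, and then `‖x‖ ≤ ‖x - H x‖` makes
the range of `1 - H` closed.
-/

open scoped InnerProductSpace

variable {X : Type*} [NormedAddCommGroup X] [InnerProductSpace ℂ X] [CompleteSpace X]

namespace LinearPMap

section idSub

variable {R E : Type*} [Ring R] [AddCommGroup E] [Module R E]

noncomputable def idSub (f : E →ₗ.[R] E) : f.domain →ₗ[R] E :=
  f.domain.subtype - f.toFun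

theorem idSub_apply (f : E →ₗ.[R] E) (x : f.domain) : f.idSub x = (x : E) - f x := rfl

end idSub

theorem isClosed_range_idSub {𝕜 E : Type*} [NontriviallyNormedField 𝕜] [NormedAddCommGroup E]
    [NormedSpace 𝕜 E] [CompleteSpace E] {f : E →ₗ.[𝕜] E} (hf : f.IsClosed)
    (hbound : ∀ x : f.domain, ‖(x : E)‖ ≤ ‖f.idSub x‖) :
    _root_.IsClosed (Set.range f.idSub) := by
  have : CompleteSpace f.graph := hf.completeSpace_coe
  let φ : f.graph →L[𝕜] E :=
    (ContinuousLinearMap.fst 𝕜 E E - ContinuousLinearMap.snd 𝕜 E E).comp f.graph.subtypeL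
  have hrange : Set.range φ = Set.range f.idSub := by
    ext y
    constructor
    · rintro ⟨⟨p, hp⟩, rfl⟩
      obtain ⟨x, rfl⟩ := (f.mem_graph_iff' (x := p)).1 hp
      exact ⟨x, rfl⟩
    · rintro ⟨x, rfl⟩
      exact ⟨⟨_, f.mem_graph x⟩, rfl⟩
  have hφ : AntilipschitzWith 2 φ := by
    refine AddMonoidHomClass.antilipschitz_of_bound φ fun ⟨p, hp⟩ => ?_
    obtain ⟨x, rfl⟩ := (f.mem_graph_iff' (x := p)).1 hp
    have hx := hbound x
    have hfx : ‖f x‖ ≤ ‖(x : E)‖ + ‖f.idSub x‖ := by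
      simpa [idSub_apply] using norm_sub_le (x : E) (x - f x)
    change max ‖(x : E)‖ ‖f x‖ ≤ 2 * ‖f.idSub x‖
    exact max_le (by linarith [norm_nonneg (f.idSub x)]) (by linarith)
  rw [← hrange]
  exact hφ.isClosed_range φ.uniformContinuous

end LinearPMap

theorem inner_eq_zero_of_forall_re_inner_nonpos {𝕜 E : Type*} [RCLike 𝕜] [NormedAddCommGroup E]
    [InnerProductSpace 𝕜 E] {S : Submodule 𝕜 E} {y : E}
    (h : ∀ u ∈ S, RCLike.re ⟪y, u⟫_𝕜 ≤ 0) {u : E} (hu : u ∈ S) : ⟪y, u⟫_𝕜 = 0 := by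
  have hre := h _ (S.smul_mem (starRingEnd 𝕜 ⟪y, u⟫_𝕜) hu)
  rw [inner_smul_right, RCLike.conj_mul, ← RCLike.ofReal_pow, RCLike.ofReal_re] at hre
  exact norm_eq_zero.1 (pow_eq_zero_iff two_ne_zero |>.1 (le_antisymm hre (sq_nonneg _)))

theorem nonpos_of_forall_pos_mul_add_sq_mul_nonpos {a b : ℝ}
    (h : ∀ t : ℝ, 0 < t → t * b + t ^ 2 * a ≤ 0) : b ≤ 0 := by
  by_contra! hb
  have ht : 0 < b / (|a| + 1) := by positivity
  have := h _ ht
  have hta : b / (|a| + 1) * |a| < b := by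
    rw [div_mul_eq_mul_div, div_lt_iff₀ (by positivity)]
    nlinarith
  nlinarith [neg_abs_le a]

open LinearPMap

section Dissipative

variable {E : Type*} [NormedAddCommGroup E] [InnerProductSpace ℂ E]

theorem isDissipative_iff_graph {H : E →ₗ.[ℂ] E} :
    IsDissipative H ↔ ∀ p ∈ H.graph, (⟪p.2, p.1⟫_ℂ).re ≤ 0 := by
  simp only [IsDissipative, mem_graph_iff]
  constructor
  · rintro h p ⟨x, hx1, hx2⟩
    rw [← hx1, ← hx2]
    exact h x
  · exact fun h x => h ((x : E), H x) ⟨x, rfl, rfl⟩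

namespace IsDissipative

variable {H : E →ₗ.[ℂ] E}

theorem norm_sq_le_re_inner_idSub (hH : IsDissipative H) (x : H.domain) :
    ‖(x : E)‖ ^ 2 ≤ (⟪H.idSub x, (x : E)⟫_ℂ).re := by
  have hx : (⟪(x : E), (x : E)⟫_ℂ).re = ‖(x : E)‖ ^ 2 := by
    simpa using inner_self_eq_norm_sq (𝕜 := ℂ) (x : E)
  rw [idSub_apply, inner_sub_left, Complex.sub_re, hx]
  linarith [hH x]

theorem norm_le_norm_idSub (hH : IsDissipative H) (x : H.domain) :
    ‖(x : E)‖ ≤ ‖H.idSub x‖ := by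
  have h := (hH.norm_sq_le_re_inner_idSub x).trans
    ((Complex.re_le_norm _).trans (norm_inner_le_norm _ _))
  nlinarith [norm_nonneg (x : E), norm_nonneg (H.idSub x)]

theorem injective_idSub (hH : IsDissipative H) : Function.Injective H.idSub := by
  refine (injective_iff_map_eq_zero _).2 fun x hx => ?_
  have := hH.norm_le_norm_idSub x
  rw [hx, norm_zero, norm_le_zero_iff] at this
  exact Subtype.ext this

theorem eq_of_le_of_surjective_idSub {K : E →ₗ.[ℂ] E} (hK : IsDissipative K) (hHK : H ≤ K)
    (hsurj : Function.Surjective H.idSub) : K = H := by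
  refine (eq_of_le_of_domain_eq hHK (le_antisymm hHK.1 fun u hu => ?_)).symm
  obtain ⟨x, hx⟩ := hsurj (K.idSub ⟨u, hu⟩)
  have hxK : K.idSub ⟨x, hHK.1 x.2⟩ = H.idSub x := by
    rw [idSub_apply, idSub_apply, ← hHK.2 (x := x) (y := ⟨x, hHK.1 x.2⟩) rfl]
  have := hK.injective_idSub (hxK.trans hx)
  have hxu : (x : E) = u := congrArg Subtype.val this
  exact hxu ▸ x.2

theorem re_inner_add_nonpos_of_mem_closure_graph (hH : IsDissipative H) {p : E × E}
    (hp : p ∈ H.graph.topologicalClosure) (u : H.domain) :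
    (⟪p.2 + H u, p.1 + u⟫_ℂ).re ≤ 0 := by
  have hclosed : IsClosed {q : E × E | (⟪q.2 + H u, q.1 + u⟫_ℂ).re ≤ 0} :=
    isClosed_le (by fun_prop) continuous_const
  refine closure_minimal (fun q hq => ?_) hclosed hp
  obtain ⟨x, rfl⟩ := (H.mem_graph_iff' (x := q)).1 hq
  simpa [H.map_add] using hH (x + u)

theorem snd_eq_zero_of_mem_closure_graph (hdense : Dense (H.domain : Set E))
    (hH : IsDissipative H) {p : E × E} (hp : p ∈ H.graph.topologicalClosure) (hp1 : p.1 = 0) :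
    p.2 = 0 := by
  have hre : ∀ u ∈ H.domain, (⟪p.2, u⟫_ℂ).re ≤ 0 := by
    intro u hu
    -- dissipativity at `x + t u`, in the limit `(x, H x) → (0, p.2)`
    refine nonpos_of_forall_pos_mul_add_sq_mul_nonpos (a := (⟪H ⟨u, hu⟩, u⟫_ℂ).re) fun t ht => ?_
    have h := hH.re_inner_add_nonpos_of_mem_closure_graph hp ((t : ℂ) • ⟨u, hu⟩)
    rw [hp1, H.map_smul, zero_add] at h
    simpa [inner_add_left, inner_smul_left, inner_smul_right, sq, mul_assoc] using h
  exact hdense.eq_zero_of_inner_left ℂ fun u hu => inner_eq_zero_of_forall_re_inner_nonpos hre hu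

theorem supSpanSingleton_neg {z : E} (hH : IsDissipative H)
    (hz : ∀ x : H.domain, ⟪H.idSub x, z⟫_ℂ = 0) (hzH : z ∉ H.domain) :
    IsDissipative (H.supSpanSingleton z (-z) hzH) := by
  rintro ⟨u, hu⟩
  obtain ⟨a, ha, _, hb, rfl⟩ := Submodule.mem_sup.1 hu
  obtain ⟨c, rfl⟩ := Submodule.mem_span_singleton.1 hb
  rw [supSpanSingleton_apply_mk H z (-z) hzH a ha c]
  have hHz : ⟪H ⟨a, ha⟩, z⟫_ℂ = ⟪a, z⟫_ℂ := by
    have := hz ⟨a, ha⟩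
    rwa [idSub_apply, inner_sub_left, sub_eq_zero, eq_comm] at this
  -- orthogonality of `z` to the range of `1 - H` makes the cross terms purely imaginary
  have key : (⟪H ⟨a, ha⟩ + c • -z, a + c • z⟫_ℂ).re
      = (⟪H ⟨a, ha⟩, a⟫_ℂ).re - ‖c‖ ^ 2 * ‖z‖ ^ 2 := by
    have hza : ⟪z, a⟫_ℂ = starRingEnd ℂ ⟪a, z⟫_ℂ := (inner_conj_symm z a).symm
    have hzz : ⟪z, z⟫_ℂ = ((‖z‖ ^ 2 : ℝ) : ℂ) := by
      rw [inner_self_eq_norm_sq_to_K]; push_cast; rfl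
    simp only [inner_add_left, inner_add_right, inner_smul_left, inner_smul_right, inner_neg_left,
      hHz, hza, hzz, mul_neg, Complex.add_re, Complex.add_im, Complex.neg_re, Complex.neg_im,
      Complex.mul_re, Complex.mul_im, Complex.conj_re, Complex.conj_im, Complex.ofReal_re,
      Complex.ofReal_im, Complex.sq_norm, Complex.normSq_apply]
    ring
  simp only [RingHom.id_apply, key]
  nlinarith [hH ⟨a, ha⟩]

theorem eq_zero_of_mem_domain_of_orthogonal {z : E} (hH : IsDissipative H)
    (hz : ∀ x : H.domain, ⟪H.idSub x, z⟫_ℂ = 0) (hzH : z ∈ H.domain) : z = 0 := by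
  have h := hH.norm_sq_le_re_inner_idSub ⟨z, hzH⟩
  rw [hz, Complex.zero_re] at h
  exact norm_eq_zero.1 (pow_eq_zero_iff two_ne_zero |>.1 (le_antisymm h (sq_nonneg _)))

end IsDissipative

namespace IsMaximalDissipative

variable {H : E →ₗ.[ℂ] E}

theorem isClosed (hdense : Dense (H.domain : Set E)) (hH : IsMaximalDissipative H) :
    H.IsClosed := by
  set G := H.graph.topologicalClosure
  have hG : ∀ p ∈ G, p.1 = 0 → p.2 = 0 := fun p hp =>
    hH.1.snd_eq_zero_of_mem_closure_graph hdense hp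
  have hK : IsDissipative G.toLinearPMap := by
    rw [isDissipative_iff_graph, Submodule.toLinearPMap_graph_eq _ hG]
    intro p hp
    simpa using hH.1.re_inner_add_nonpos_of_mem_closure_graph hp 0
  have hHK : H ≤ G.toLinearPMap := by
    apply le_of_le_graph
    rw [Submodule.toLinearPMap_graph_eq _ hG]
    exact H.graph.le_topologicalClosure
  rw [LinearPMap.IsClosed, ← hH.2 _ hK hHK, Submodule.toLinearPMap_graph_eq _ hG]
  exact H.graph.isClosed_topologicalClosure

theorem dense_range_idSub [CompleteSpace E] (hH : IsMaximalDissipative H) :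
    Dense (Set.range H.idSub) := by
  rw [← LinearMap.coe_range, Submodule.dense_iff_topologicalClosure_eq_top,
    Submodule.topologicalClosure_eq_top_iff, Submodule.eq_bot_iff]
  intro z hzo
  have hz : ∀ x : H.domain, ⟪H.idSub x, z⟫_ℂ = 0 := fun x =>
    (Submodule.mem_orthogonal _ z).1 hzo _ (LinearMap.mem_range_self _ x)
  by_cases hzH : z ∈ H.domain
  · exact hH.1.eq_zero_of_mem_domain_of_orthogonal hz hzH
  · have hK := hH.2 _ (hH.1.supSpanSingleton_neg hz hzH) (H.left_le_sup _ _)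
    refine absurd ?_ hzH
    rw [← hK, domain_supSpanSingleton]
    exact Submodule.mem_sup_right (Submodule.mem_span_singleton_self z)

end IsMaximalDissipative

end Dissipative

/-- **Minty's theorem for linear operators.** A linear, densely defined,
dissipative operator `H` in a complex Hilbert space is maximal dissipative if and only if
`1 − H` is onto. -/
theorem stmt_4 (H : X →ₗ.[ℂ] X) (hdense : Dense (H.domain : Set X))
    (hdiss : IsDissipative H) :
    IsMaximalDissipative H ↔ ∀ y : X, ∃ x : H.domain, (x : X) - H x = y := by
  refine ⟨fun hmax => ?_, fun hsurj =>
    ⟨hdiss, fun K hK hHK => hK.eq_of_le_of_surjective_idSub hHK hsurj⟩⟩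
  have hclosed := isClosed_range_idSub (hmax.isClosed hdense) hdiss.norm_le_norm_idSub
  exact (Set.range_eq_univ (f := H.idSub)).1
    (by rw [← hclosed.closure_eq, hmax.dense_range_idSub.closure_eq])
end

section
/- Let X be a complex Hilbert space, 𝓗 ∈ L(X) a bounded self-adjoint operator with ⟨x, 𝓗x⟩ ≥ c‖x‖² for all x ∈ X and some c > 0, and let H : D(H) ⊆ X → X be linear. Then the following are equivalent: (i) H is densely defined and maximal dissipative in X; (ii) the operator H𝓗 (with domain {x ∈ X : 𝓗x ∈ D(H)}, x ↦ H(𝓗x)) is densely defined and maximal dissipative in the Hilbert space X_𝓗 = (X, ⟨·, 𝓗·⟩). -/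
/-! Coercivity makes `𝓗` an isomorphism of `X`: it is bounded below, hence injective with closed
range, and a vector orthogonal to the range is killed by the coercivity estimate. Since
`⟪H (𝓗 x), 𝓗 x⟫ = ⟪(H𝓗) x, x⟫_𝓗`, right composition `K ↦ K𝓗` is then an automorphism of the
operators ordered by extension which carries the dissipative operators exactly onto the
`𝓗`-dissipative ones, so it preserves maximality; and `D(H𝓗) = 𝓗⁻¹ D(H)` is dense iff `D(H)` is,
`𝓗` being a homeomorphism. -/

open scoped InnerProductSpace

variable {X : Type*} [NormedAddCommGroup X] [InnerProductSpace ℂ X] [CompleteSpace X]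

/-- Dissipativity with respect to the weighted inner product
`⟪u, v⟫_𝓗 := ⟪u, 𝓗 v⟫` of `X_𝓗`: `Re ⟪H x, x⟫_𝓗 = Re ⟪H x, 𝓗 x⟫ ≤ 0` on the domain. -/
def IsDissipativeWt (𝓗 : X →L[ℂ] X) (H : X →ₗ.[ℂ] X) : Prop :=
  ∀ x : H.domain, (⟪H x, 𝓗 (x : X)⟫_ℂ).re ≤ 0

/-- Maximal dissipativity in the weighted space `X_𝓗`. -/
def IsMaximalDissipativeWt (𝓗 : X →L[ℂ] X) (H : X →ₗ.[ℂ] X) : Prop :=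
  IsDissipativeWt 𝓗 H ∧ ∀ K : X →ₗ.[ℂ] X, IsDissipativeWt 𝓗 K → H ≤ K → K = H

/-- The operator `H𝓗` with domain `{x : 𝓗 x ∈ D(H)}`, acting by `x ↦ H (𝓗 x)`. -/
noncomputable def pmapComp (H : X →ₗ.[ℂ] X) (𝓗 : X →L[ℂ] X) : X →ₗ.[ℂ] X where
  domain := H.domain.comap (𝓗 : X →ₗ[ℂ] X)
  toFun := H.toFun.comp (((𝓗 : X →ₗ[ℂ] X)).restrict fun _ hx => hx)

section Coercive

variable {𝕜 E : Type*} [RCLike 𝕜] [NormedAddCommGroup E] [InnerProductSpace 𝕜 E]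
  {A : E →L[𝕜] E} {c : ℝ}

lemma mul_norm_le_norm_apply_of_coercive (hcoer : ∀ x, c * ‖x‖ ^ 2 ≤ RCLike.re ⟪x, A x⟫_𝕜)
    (x : E) : c * ‖x‖ ≤ ‖A x‖ := by
  rcases eq_or_ne x 0 with rfl | hx
  · simp
  refine le_of_mul_le_mul_right ?_ (norm_pos_iff.mpr hx)
  calc c * ‖x‖ * ‖x‖ = c * ‖x‖ ^ 2 := by ring
    _ ≤ RCLike.re ⟪x, A x⟫_𝕜 := hcoer x
    _ ≤ ‖⟪x, A x⟫_𝕜‖ := RCLike.re_le_norm _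
    _ ≤ ‖x‖ * ‖A x‖ := norm_inner_le_norm _ _
    _ = ‖A x‖ * ‖x‖ := mul_comm _ _

lemma antilipschitzWith_of_coercive (hc : 0 < c)
    (hcoer : ∀ x, c * ‖x‖ ^ 2 ≤ RCLike.re ⟪x, A x⟫_𝕜) :
    AntilipschitzWith (Real.toNNReal c⁻¹) A :=
  AddMonoidHomClass.antilipschitz_of_bound A fun x => by
    rw [Real.coe_toNNReal _ (inv_nonneg.2 hc.le), ← div_eq_inv_mul, le_div_iff₀' hc]
    exact mul_norm_le_norm_apply_of_coercive hcoer x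

lemma orthogonal_range_eq_bot_of_coercive (hc : 0 < c)
    (hcoer : ∀ x, c * ‖x‖ ^ 2 ≤ RCLike.re ⟪x, A x⟫_𝕜) :
    (LinearMap.range (A : E →ₗ[𝕜] E))ᗮ = ⊥ := by
  refine (Submodule.eq_bot_iff _).mpr fun y hy => ?_
  have hAy : ⟪A y, y⟫_𝕜 = 0 :=
    (Submodule.mem_orthogonal _ _).mp hy (A y) (LinearMap.mem_range_self _ y)
  have hcy : c * ‖y‖ ^ 2 ≤ 0 := by simpa [← inner_conj_symm y, hAy] using hcoer y
  have hy0 : ‖y‖ ^ 2 ≤ 0 := nonpos_of_mul_nonpos_right hcy hc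
  exact norm_eq_zero.mp (pow_eq_zero_iff two_ne_zero |>.mp (hy0.antisymm (sq_nonneg _)))

lemma exists_continuousLinearEquiv_of_coercive [CompleteSpace E] (hc : 0 < c)
    (hcoer : ∀ x, c * ‖x‖ ^ 2 ≤ RCLike.re ⟪x, A x⟫_𝕜) :
    ∃ e : E ≃L[𝕜] E, (e : E →L[𝕜] E) = A := by
  have hanti := antilipschitzWith_of_coercive hc hcoer
  have hker : (A : E →ₗ[𝕜] E).ker = ⊥ := LinearMap.ker_eq_bot.mpr hanti.injective
  have hrange : (A : E →ₗ[𝕜] E).range = ⊤ := by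
    have hclosed : IsClosed (LinearMap.range (A : E →ₗ[𝕜] E) : Set E) :=
      hanti.isClosed_range A.uniformContinuous
    rw [← hclosed.submodule_topologicalClosure_eq, Submodule.topologicalClosure_eq_top_iff]
    exact orthogonal_range_eq_bot_of_coercive hc hcoer
  exact ⟨.ofBijective A hker hrange, ContinuousLinearEquiv.coe_ofBijective _ _ _⟩

end Coercive

section WeightedOperator

variable {V : Type*} [NormedAddCommGroup V] [InnerProductSpace ℂ V]

lemma pmapComp_apply (H : V →ₗ.[ℂ] V) (A : V →L[ℂ] V) (x : (pmapComp H A).domain) :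
    pmapComp H A x = H ⟨A x, x.2⟩ := rfl

lemma pmapComp_mono (A : V →L[ℂ] V) : Monotone (pmapComp · A) := fun _ _ h =>
  ⟨fun _ hx => h.1 hx, fun _ _ hxy => h.2 (congrArg A hxy)⟩

lemma pmapComp_pmapComp (H : V →ₗ.[ℂ] V) {A B : V →L[ℂ] V} (hAB : ∀ x, A (B x) = x) :
    pmapComp (pmapComp H A) B = H := by
  exact LinearPMap.ext (by ext x; simp [pmapComp, hAB])
    fun x _ _ => congrArg H (Subtype.ext (hAB x))

noncomputable def pmapCompOrderIso (e : V ≃L[ℂ] V) : (V →ₗ.[ℂ] V) ≃o (V →ₗ.[ℂ] V) :=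
  Equiv.toOrderIso
    { toFun := (pmapComp · e)
      invFun := (pmapComp · e.symm)
      left_inv := fun H => pmapComp_pmapComp H e.apply_symm_apply
      right_inv := fun H => pmapComp_pmapComp H e.symm_apply_apply }
    (pmapComp_mono _) (pmapComp_mono _)

lemma isDissipativeWt_pmapComp_iff (H : V →ₗ.[ℂ] V) {A : V →L[ℂ] V}
    (hA : Function.Surjective A) : IsDissipativeWt A (pmapComp H A) ↔ IsDissipative H := by
  refine ⟨fun h y => ?_, fun h x => h ⟨A x, x.2⟩⟩
  obtain ⟨x, hx⟩ := hA y
  have hxD : x ∈ (pmapComp H A).domain := show A x ∈ H.domain from hx ▸ y.2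
  simpa [pmapComp_apply, hx] using h ⟨x, hxD⟩

lemma isMaximalDissipative_iff_maximal (H : V →ₗ.[ℂ] V) :
    IsMaximalDissipative H ↔ Maximal IsDissipative H := by
  simp only [IsMaximalDissipative, maximal_iff, eq_comm]

lemma isMaximalDissipativeWt_iff_maximal (A : V →L[ℂ] V) (H : V →ₗ.[ℂ] V) :
    IsMaximalDissipativeWt A H ↔ Maximal (IsDissipativeWt A) H := by
  simp only [IsMaximalDissipativeWt, maximal_iff, eq_comm]

lemma isMaximalDissipativeWt_pmapComp_iff (H : V →ₗ.[ℂ] V) (e : V ≃L[ℂ] V) :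
    IsMaximalDissipativeWt e (pmapComp H e) ↔ IsMaximalDissipative H := by
  have hpull : (fun K => IsDissipativeWt e (pmapCompOrderIso e K)) = IsDissipative :=
    funext fun K => propext (isDissipativeWt_pmapComp_iff K e.surjective)
  rw [isMaximalDissipativeWt_iff_maximal, isMaximalDissipative_iff_maximal, ← hpull]
  exact (pmapCompOrderIso e).toOrderEmbedding.maximal_apply_mem_iff
    (t := {K | IsDissipativeWt e K}) (by simp)

lemma dense_pmapComp_domain_iff (H : V →ₗ.[ℂ] V) (e : V ≃L[ℂ] V) :
    Dense ((pmapComp H e).domain : Set V) ↔ Dense (H.domain : Set V) :=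
  e.toHomeomorph.isOpenQuotientMap.dense_preimage_iff

end WeightedOperator

theorem stmt_5_general (𝓗 : X →L[ℂ] X)
    (c : ℝ) (hc : 0 < c) (hcoer : ∀ x : X, c * ‖x‖ ^ 2 ≤ (⟪x, 𝓗 x⟫_ℂ).re)
    (H : X →ₗ.[ℂ] X) :
    (Dense (H.domain : Set X) ∧ IsMaximalDissipative H) ↔
      (Dense ((pmapComp H 𝓗).domain : Set X) ∧ IsMaximalDissipativeWt 𝓗 (pmapComp H 𝓗)) := by
  obtain ⟨e, rfl⟩ := exists_continuousLinearEquiv_of_coercive (𝕜 := ℂ) hc hcoer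
  rw [dense_pmapComp_domain_iff, isMaximalDissipativeWt_pmapComp_iff]

/-- Let `𝓗` be a bounded self-adjoint operator with `⟪x, 𝓗 x⟫ ≥ c ‖x‖²`
for some `c > 0` (a uniformly finite weight) and `H` a linear operator in `X`.  Then `H` is
densely defined and maximal dissipative in `X` if and only if `H𝓗` is densely defined and
maximal dissipative in the weighted Hilbert space `X_𝓗 = (X, ⟪·, 𝓗 ·⟫)` (whose norm is
equivalent to that of `X`, so density may be expressed in `X`). -/
theorem stmt_5 (𝓗 : X →L[ℂ] X) (hsa : IsSelfAdjoint 𝓗)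
    (c : ℝ) (hc : 0 < c) (hcoer : ∀ x : X, c * ‖x‖ ^ 2 ≤ (⟪x, 𝓗 x⟫_ℂ).re)
    (H : X →ₗ.[ℂ] X) :
    (Dense (H.domain : Set X) ∧ IsMaximalDissipative H) ↔
      (Dense ((pmapComp H 𝓗).domain : Set X) ∧ IsMaximalDissipativeWt 𝓗 (pmapComp H 𝓗)) :=
  stmt_5_general 𝓗 c hc hcoer H
end

section
/- Let X be a complex Hilbert space and 𝓗 a self-adjoint (possibly unbounded) operator in X. Assume there is an increasing sequence (Xₙ) of closed subspaces of X such that for each n: Xₙ ⊆ D(𝓗), 𝓗(Xₙ) ⊆ Xₙ, there is cₙ > 0 with ⟨y, 𝓗y⟩ ≥ cₙ‖y‖² for all y ∈ Xₙ, and the restriction of 𝓗 to ⋃ₙ Xₙ is essentially self-adjoint in X (in particular ⋃ₙ Xₙ is dense in X). Then 𝓗 is injective. -/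
/-!
If `𝓗 x = 0`, symmetry gives `⟪x, 𝓗 y⟫ = 0` for every `y` in the domain. Let `z` be the
orthogonal projection of `x` onto an invariant subspace `Xₙ`. Since `𝓗 z ∈ Xₙ` is orthogonal
to `x - z`, we get `⟪z, 𝓗 z⟫ = ⟪x, 𝓗 z⟫ = 0`, so coercivity forces `z = 0`, i.e. `x ⊥ Xₙ`.
Thus `x` is orthogonal to the dense subspace `⨆ₙ Xₙ`, hence `x = 0`.
-/

open scoped InnerProductSpace

namespace LinearPMap

variable {𝕜 E : Type*} [RCLike 𝕜] [NormedAddCommGroup E] [InnerProductSpace 𝕜 E]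

theorem IsFormalAdjoint.inner_map_eq_zero_of_map_eq_zero {T : E →ₗ.[𝕜] E}
    (hT : T.IsFormalAdjoint T) {x : T.domain} (hx : T x = 0) (y : T.domain) :
    ⟪(x : E), T y⟫_𝕜 = 0 := by
  rw [← hT, hx, inner_zero_left]

theorem mem_orthogonal_of_map_eq_zero {T : E →ₗ.[𝕜] E} (hT : T.IsFormalAdjoint T)
    {K : Submodule 𝕜 E} [K.HasOrthogonalProjection] (hK : K ≤ T.domain)
    (hinv : ∀ y : T.domain, (y : E) ∈ K → T y ∈ K)
    (hdef : ∀ y : T.domain, (y : E) ∈ K → ⟪(y : E), T y⟫_𝕜 = 0 → (y : E) = 0)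
    {x : T.domain} (hx : T x = 0) : (x : E) ∈ Kᗮ := by
  set z : E := K.starProjection x
  have hzK : z ∈ K := K.starProjection_apply_mem x
  let zd : T.domain := ⟨z, hK hzK⟩
  have hz : ⟪z, T zd⟫_𝕜 = 0 := by
    have hperp : ⟪(x : E) - z, T zd⟫_𝕜 = 0 :=
      K.starProjection_inner_eq_zero _ _ (hinv zd hzK)
    rwa [inner_sub_left, hT.inner_map_eq_zero_of_map_eq_zero hx, zero_sub, neg_eq_zero]
      at hperp
  have hz0 : z = 0 := hdef zd hzK hz
  have hxz : (x : E) - z ∈ Kᗮ := K.sub_starProjection_mem_orthogonal (x : E)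
  rwa [hz0, sub_zero] at hxz

end LinearPMap

variable {X : Type*} [NormedAddCommGroup X] [InnerProductSpace ℂ X] [CompleteSpace X]

theorem stmt_6_general (𝓗 : X →ₗ.[ℂ] X) (hdense : Dense (𝓗.domain : Set X))
    (hsa : 𝓗.adjoint = 𝓗)
    (Xn : ℕ → Submodule ℂ X)
    (hXnclosed : ∀ n, IsClosed ((Xn n : Submodule ℂ X) : Set X))
    (hsub : ∀ n, Xn n ≤ 𝓗.domain)
    (hinv : ∀ (n : ℕ) (x : 𝓗.domain), (x : X) ∈ Xn n → 𝓗 x ∈ Xn n)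
    (hcoer : ∀ n : ℕ, ∃ c : ℝ, 0 < c ∧
      ∀ x : 𝓗.domain, (x : X) ∈ Xn n → c * ‖(x : X)‖ ^ 2 ≤ (⟪(x : X), 𝓗 x⟫_ℂ).re)
    (hUdense : Dense (((⨆ n, Xn n : Submodule ℂ X)) : Set X)) :
    ∀ x : 𝓗.domain, 𝓗 x = 0 → (x : X) = 0 := by
  intro x hx
  have hsymm : 𝓗.IsFormalAdjoint 𝓗 := by
    simpa only [hsa] using 𝓗.adjoint_isFormalAdjoint hdense
  have hperp : ∀ n, (x : X) ∈ (Xn n)ᗮ := fun n ↦ by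
    have : CompleteSpace (Xn n) := (hXnclosed n).completeSpace_coe
    obtain ⟨c, hc, hcn⟩ := hcoer n
    refine LinearPMap.mem_orthogonal_of_map_eq_zero hsymm (hsub n) (hinv n) (fun y hy h0 ↦ ?_) hx
    have hy0 := hcn y hy
    rw [h0, Complex.zero_re] at hy0
    exact norm_eq_zero.mp <| pow_eq_zero_iff two_ne_zero |>.mp <|
      le_antisymm (nonpos_of_mul_nonpos_right hy0 hc) (sq_nonneg _)
  refine hUdense.eq_zero_of_mem_orthogonal ?_
  rw [← Submodule.iInf_orthogonal]
  exact Submodule.mem_iInf _ |>.mpr hperp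

/-- Let `𝓗` be a (possibly unbounded) self-adjoint operator in a complex
Hilbert space `X`.  Assume there is an increasing sequence `(Xₙ)` of closed subspaces with
`Xₙ ⊆ D(𝓗)`, `𝓗(Xₙ) ⊆ Xₙ`, `⟪y, 𝓗 y⟫ ≥ cₙ ‖y‖²` on `Xₙ` for some `cₙ > 0`, such that the
restriction of `𝓗` to `⋃ₙ Xₙ` is essentially self-adjoint (in particular `⋃ₙ Xₙ` is dense).
Then `𝓗` is injective. -/
theorem stmt_6 (𝓗 : X →ₗ.[ℂ] X) (hdense : Dense (𝓗.domain : Set X))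
    (hsa : 𝓗.adjoint = 𝓗)
    (Xn : ℕ → Submodule ℂ X) (hmono : Monotone Xn)
    (hXnclosed : ∀ n, IsClosed ((Xn n : Submodule ℂ X) : Set X))
    (hsub : ∀ n, Xn n ≤ 𝓗.domain)
    (hinv : ∀ (n : ℕ) (x : 𝓗.domain), (x : X) ∈ Xn n → 𝓗 x ∈ Xn n)
    (hcoer : ∀ n : ℕ, ∃ c : ℝ, 0 < c ∧
      ∀ x : 𝓗.domain, (x : X) ∈ Xn n → c * ‖(x : X)‖ ^ 2 ≤ (⟪(x : X), 𝓗 x⟫_ℂ).re)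
    (hUdense : Dense (((⨆ n, Xn n : Submodule ℂ X)) : Set X))
    (hclosable : (𝓗.domRestrict (⨆ n, Xn n)).IsClosable)
    (hess : ((𝓗.domRestrict (⨆ n, Xn n)).closure).adjoint
      = (𝓗.domRestrict (⨆ n, Xn n)).closure) :
    ∀ x : 𝓗.domain, 𝓗 x = 0 → (x : X) = 0 :=
  stmt_6_general 𝓗 hdense hsa Xn hXnclosed hsub hinv hcoer hUdense
end

section
/- Let X be a complex Hilbert space and H : D(H) ⊆ X → X linear and densely defined. Then the following are equivalent: (i) H is dissipative and the range of 1 − H (i.e., {x − Hx : x ∈ D(H)}) is dense in X; (ii) H is closable and its closure H̄ is maximal dissipative. -/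
/-!
By the Cauchy–Schwarz inequality a dissipative operator satisfies `‖x‖ ≤ ‖x - H x‖`, so `1 - H`
is injective and bounded below on the graph, and the range of `1 - H` is closed when `H` is
closed. Dissipativity is a closed condition on graph points, so it passes to the closure of the
graph; testing it on `(u, H u) + s • (0, y)` shows that `(0, y)` in the closed graph forces
`y ⊥ D(H)`, so a densely defined dissipative `H` is closable. For (i) ⇒ (ii), the range of
`1 - H̄` is then closed and dense, hence all of `X`, and injectivity of `1 - K` rules out proper
dissipative extensions `K`. For (ii) ⇒ (i), a nonzero `y` orthogonal to the range of `1 - H̄`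
lies outside `D(H̄)`, and extending `H̄` by `y ↦ -y` stays dissipative, contradicting maximality;
the range of `1 - H̄` lies in the closure of the range of `1 - H`.
-/

open scoped InnerProductSpace

variable {X : Type*} [NormedAddCommGroup X] [InnerProductSpace ℂ X] [CompleteSpace X]

namespace LinearPMap

section Ring

variable {R E : Type*} [Ring R] [AddCommGroup E] [Module R E]

def rangeOneSub (F : E →ₗ.[R] E) : Submodule R E :=
  F.graph.map (LinearMap.fst R E E - LinearMap.snd R E E)

theorem mem_rangeOneSub {F : E →ₗ.[R] E} {y : E} :
    y ∈ F.rangeOneSub ↔ ∃ x : F.domain, (x : E) - F x = y := by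
  constructor
  · rintro ⟨p, hp, rfl⟩
    obtain ⟨x, hx1, hx2⟩ := F.mem_graph_iff.1 hp
    exact ⟨x, by simp [hx1, hx2]⟩
  · rintro ⟨x, rfl⟩
    exact ⟨_, F.mem_graph x, rfl⟩

theorem coe_rangeOneSub (F : E →ₗ.[R] E) :
    (F.rangeOneSub : Set E) = {y | ∃ x : F.domain, (x : E) - F x = y} :=
  Set.ext fun _ => mem_rangeOneSub

theorem sub_apply_mem_rangeOneSub (F : E →ₗ.[R] E) (x : F.domain) :
    (x : E) - F x ∈ F.rangeOneSub :=
  mem_rangeOneSub.2 ⟨x, rfl⟩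

theorem rangeOneSub_mono {F G : E →ₗ.[R] E} (h : F ≤ G) : F.rangeOneSub ≤ G.rangeOneSub :=
  Submodule.map_mono (le_graph_of_le h)

end Ring

theorem IsClosable.rangeOneSub_closure_le {R E : Type*} [CommRing R] [AddCommGroup E]
    [Module R E] [TopologicalSpace R] [TopologicalSpace E] [IsTopologicalAddGroup E]
    [ContinuousSMul R E] {F : E →ₗ.[R] E} (hF : F.IsClosable) :
    F.closure.rangeOneSub ≤ F.rangeOneSub.topologicalClosure := by
  rw [rangeOneSub, ← hF.graph_closure_eq_closure_graph]
  exact Submodule.topologicalClosure_map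
    (ContinuousLinearMap.fst R E E - ContinuousLinearMap.snd R E E) _

theorem le_supSpanSingleton {K E F : Type*} [DivisionRing K] [AddCommGroup E] [Module K E]
    [AddCommGroup F] [Module K F] (f : E →ₗ.[K] F) {x : E} (y : F) (hx : x ∉ f.domain) :
    f ≤ f.supSpanSingleton x y hx :=
  ⟨le_sup_left, fun a b hab => by
    rw [supSpanSingleton_apply_of_mem _ _ _ b (hab ▸ a.2)]
    congr
    exact Subtype.ext hab⟩

end LinearPMap

section InnerProductSpace

variable {E : Type*} [NormedAddCommGroup E] [InnerProductSpace ℂ E] {H : E →ₗ.[ℂ] E}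

theorem IsDissipative.mono {K : E →ₗ.[ℂ] E} (hK : IsDissipative K) (h : H ≤ K) :
    IsDissipative H := fun x => by
  obtain ⟨y, hxy, hHK⟩ := LinearPMap.exists_of_le h x
  rw [hHK, hxy]
  exact hK y

theorem IsDissipative.re_inner_le_zero_of_mem_closure_graph (h : IsDissipative H) {p : E × E}
    (hp : p ∈ H.graph.topologicalClosure) : (⟪p.2, p.1⟫_ℂ).re ≤ 0 := by
  have hclosed : IsClosed {p : E × E | (⟪p.2, p.1⟫_ℂ).re ≤ 0} :=
    isClosed_le (Complex.continuous_re.comp (continuous_snd.inner continuous_fst))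
      continuous_const
  refine closure_minimal (fun q hq => ?_) hclosed hp
  obtain ⟨x, hx, hHx⟩ := H.mem_graph_iff.1 hq
  show (⟪q.2, q.1⟫_ℂ).re ≤ 0
  rw [← hx, ← hHx]
  exact h x

theorem IsDissipative.closure (h : IsDissipative H) (hH : H.IsClosable) :
    IsDissipative H.closure := fun x => by
  apply h.re_inner_le_zero_of_mem_closure_graph (p := ((x : E), H.closure x))
  rw [hH.graph_closure_eq_closure_graph]
  exact H.closure.mem_graph x

theorem IsDissipative.eq_zero_of_mem_closure_graph (h : IsDissipative H)
    (hdense : Dense (H.domain : Set E)) {y : E}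
    (hy : ((0 : E), y) ∈ H.graph.topologicalClosure) : y = 0 := by
  refine hdense.eq_zero_of_inner_left ℂ fun u hu => ?_
  set w := ⟪y, u⟫_ℂ
  have hbound : ∀ t : ℝ, t * ‖w‖ ^ 2 + (⟪H ⟨u, hu⟩, u⟫_ℂ).re ≤ 0 := fun t => by
    have hmem : (u, H ⟨u, hu⟩ + ((t : ℂ) * w) • y) ∈ H.graph.topologicalClosure := by
      simpa using add_mem (H.graph.le_topologicalClosure (H.mem_graph ⟨u, hu⟩))
        (Submodule.smul_mem _ ((t : ℂ) * w) hy)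
    have := h.re_inner_le_zero_of_mem_closure_graph hmem
    rw [inner_add_left, inner_smul_left, map_mul, Complex.conj_ofReal, mul_assoc,
      Complex.conj_mul', ← Complex.ofReal_pow, ← Complex.ofReal_mul, Complex.add_re,
      Complex.ofReal_re] at this
    linarith
  by_contra hw
  have hpos : 0 < ‖w‖ ^ 2 := by positivity
  have := hbound ((1 - (⟪H ⟨u, hu⟩, u⟫_ℂ).re) / ‖w‖ ^ 2)
  rw [div_mul_cancel₀ _ hpos.ne'] at this
  linarith

theorem IsDissipative.isClosable (h : IsDissipative H) (hdense : Dense (H.domain : Set E)) :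
    H.IsClosable := by
  refine ⟨_, (Submodule.toLinearPMap_graph_eq _ fun p hp hp1 => ?_).symm⟩
  rw [← Prod.mk.eta (p := p), hp1] at hp
  exact h.eq_zero_of_mem_closure_graph hdense hp

theorem IsDissipative.norm_le_norm_sub_apply (h : IsDissipative H) (x : H.domain) :
    ‖(x : E)‖ ≤ ‖(x : E) - H x‖ := by
  have key : ‖(x : E)‖ * ‖(x : E)‖ ≤ ‖(x : E) - H x‖ * ‖(x : E)‖ := calc
    ‖(x : E)‖ * ‖(x : E)‖ = (⟪(x : E), x⟫_ℂ).re := by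
      rw [← RCLike.re_to_complex, inner_self_eq_norm_mul_norm]
    _ ≤ (⟪(x : E), x⟫_ℂ).re - (⟪H x, (x : E)⟫_ℂ).re := by linarith [h x]
    _ = (⟪(x : E) - H x, x⟫_ℂ).re := by rw [inner_sub_left, Complex.sub_re]
    _ ≤ ‖(x : E) - H x‖ * ‖(x : E)‖ := by
      simpa only [RCLike.re_to_complex] using re_inner_le_norm (𝕜 := ℂ) ((x : E) - H x) x
  rcases (norm_nonneg (x : E)).eq_or_lt with hx | hx
  · exact hx ▸ norm_nonneg _
  · exact le_of_mul_le_mul_right key hx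

theorem IsDissipative.eq_of_sub_apply_eq (h : IsDissipative H) {x y : H.domain}
    (hxy : (x : E) - H x = y - H y) : x = y := by
  have := h.norm_le_norm_sub_apply (x - y)
  rw [H.map_sub, Submodule.coe_sub, sub_sub_sub_comm, hxy, sub_self, norm_zero,
    norm_le_zero_iff, sub_eq_zero] at this
  exact Subtype.ext this

theorem IsDissipative.notMem_domain_of_mem_orthogonal (h : IsDissipative H) {y : E}
    (hy : y ∈ H.rangeOneSubᗮ) (hy0 : y ≠ 0) : y ∉ H.domain := fun hyd => by
  have horth := (Submodule.mem_orthogonal _ y).1 hy _ (H.sub_apply_mem_rangeOneSub ⟨y, hyd⟩)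
  rw [inner_sub_left, sub_eq_zero] at horth
  have := h ⟨y, hyd⟩
  rw [← horth, ← RCLike.re_to_complex, inner_self_eq_norm_mul_norm] at this
  exact hy0 (norm_eq_zero.1 (by nlinarith [norm_nonneg y]))

theorem IsDissipative.supSpanSingleton_neg_s8 (h : IsDissipative H) {y : E}
    (hy : y ∈ H.rangeOneSubᗮ) (hyd : y ∉ H.domain) :
    IsDissipative (H.supSpanSingleton y (-y) hyd) := by
  rintro ⟨_, hw⟩
  obtain ⟨a, ha, _, hb, rfl⟩ := Submodule.mem_sup.1 hw
  obtain ⟨c, rfl⟩ := Submodule.mem_span_singleton.1 hb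
  rw [LinearPMap.supSpanSingleton_apply_mk _ _ _ _ _ ha]
  have horth : ⟪H ⟨a, ha⟩, y⟫_ℂ = ⟪a, y⟫_ℂ := by
    have := (Submodule.mem_orthogonal _ y).1 hy _ (H.sub_apply_mem_rangeOneSub ⟨a, ha⟩)
    rwa [inner_sub_left, sub_eq_zero, eq_comm] at this
  -- the cross terms `c * ⟪a, y⟫ - conj (c * ⟪a, y⟫)` are purely imaginary
  have hinner : ⟪H ⟨a, ha⟩ + c • -y, a + c • y⟫_ℂ =
      ⟪H ⟨a, ha⟩, a⟫_ℂ + (c * ⟪a, y⟫_ℂ - starRingEnd ℂ (c * ⟪a, y⟫_ℂ)) -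
        ((‖c‖ ^ 2 * ‖y‖ ^ 2 : ℝ) : ℂ) := by
    simp only [inner_add_left, inner_add_right, inner_smul_left, inner_smul_right, inner_neg_left,
      horth, ← inner_conj_symm y a, inner_self_eq_norm_sq_to_K, map_mul]
    push_cast
    linear_combination -(↑‖y‖ ^ 2 : ℂ) * Complex.conj_mul' c
  show (⟪H ⟨a, ha⟩ + c • -y, a + c • y⟫_ℂ).re ≤ 0
  rw [hinner, Complex.sub_re, Complex.add_re, Complex.sub_re, Complex.conj_re, sub_self, add_zero,
    Complex.ofReal_re]
  nlinarith [h ⟨a, ha⟩, mul_nonneg (sq_nonneg ‖c‖) (sq_nonneg ‖y‖)]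

theorem IsDissipative.isMaximalDissipative_of_rangeOneSub_eq_top (h : IsDissipative H)
    (hr : H.rangeOneSub = ⊤) : IsMaximalDissipative H := by
  refine ⟨h, fun K hK hHK => ?_⟩
  refine (LinearPMap.eq_of_le_of_domain_eq hHK (le_antisymm hHK.1 fun a ha => ?_)).symm
  have hmem : a - K ⟨a, ha⟩ ∈ H.rangeOneSub := hr ▸ Submodule.mem_top
  obtain ⟨z, hz⟩ := LinearPMap.mem_rangeOneSub.1 hmem
  obtain ⟨w, hzw, hHKz⟩ := LinearPMap.exists_of_le hHK z
  have haw : (⟨a, ha⟩ : K.domain) = w := hK.eq_of_sub_apply_eq (by rw [← hzw, ← hHKz, hz])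
  rw [show a = z by rw [hzw, ← haw]]
  exact z.2

end InnerProductSpace

theorem IsDissipative.isClosed_rangeOneSub {H : X →ₗ.[ℂ] X} (h : IsDissipative H)
    (hH : H.IsClosed) : IsClosed (H.rangeOneSub : Set X) := by
  have : CompleteSpace H.graph := hH.completeSpace_coe
  let T : H.graph →L[ℂ] X :=
    (ContinuousLinearMap.fst ℂ X X - ContinuousLinearMap.snd ℂ X X).comp H.graph.subtypeL
  have hT : Set.range T = H.rangeOneSub := by
    ext
    simp [T, LinearPMap.rangeOneSub]
  have hbound : ∀ p, ‖p‖ ≤ (2 : NNReal) * ‖T p‖ := by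
    rintro ⟨⟨_, _⟩, hp⟩
    obtain ⟨x, rfl, rfl⟩ := H.mem_graph_iff.1 hp
    have hx := h.norm_le_norm_sub_apply x
    have hHx : ‖H x‖ ≤ ‖(x : X)‖ + ‖(x : X) - H x‖ := by
      simpa using norm_sub_le (x : X) ((x : X) - H x)
    show ‖((x : X), H x)‖ ≤ 2 * ‖(x : X) - H x‖
    exact norm_prod_le_iff.2 ⟨by linarith [norm_nonneg ((x : X) - H x)], by linarith⟩
  rw [← hT]
  exact (T.antilipschitz_of_bound hbound).isClosed_range T.uniformContinuous

theorem IsMaximalDissipative.topologicalClosure_rangeOneSub {H : X →ₗ.[ℂ] X}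
    (h : IsMaximalDissipative H) : H.rangeOneSub.topologicalClosure = ⊤ := by
  rw [Submodule.topologicalClosure_eq_top_iff, Submodule.eq_bot_iff]
  intro y hy
  by_contra hy0
  have hyd := h.1.notMem_domain_of_mem_orthogonal hy hy0
  have hext := h.2 _ (h.1.supSpanSingleton_neg_s8 hy hyd) (H.le_supSpanSingleton (-y) hyd)
  exact hyd (hext ▸ Submodule.mem_sup_right (Submodule.mem_span_singleton_self y))

/-- For a linear, densely defined operator `H` in a complex Hilbert space,
the following are equivalent: (i) `H` is dissipative and the range of `1 − H` is dense in
`X`; (ii) `H` is closable and its closure is maximal dissipative. -/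
theorem stmt_8 (H : X →ₗ.[ℂ] X) (hdense : Dense (H.domain : Set X)) :
    (IsDissipative H ∧ Dense {y : X | ∃ x : H.domain, (x : X) - H x = y}) ↔
      (H.IsClosable ∧ IsMaximalDissipative H.closure) := by
  rw [← LinearPMap.coe_rangeOneSub, Submodule.dense_iff_topologicalClosure_eq_top]
  constructor
  · rintro ⟨hH, hrange⟩
    have hc := hH.isClosable hdense
    have hHc := hH.closure hc
    refine ⟨hc, hHc.isMaximalDissipative_of_rangeOneSub_eq_top ?_⟩
    rw [← (hHc.isClosed_rangeOneSub hc.closure_isClosed).submodule_topologicalClosure_eq,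
      eq_top_iff, ← hrange]
    exact Submodule.topologicalClosure_mono (LinearPMap.rangeOneSub_mono H.le_closure)
  · rintro ⟨hc, hmax⟩
    refine ⟨hmax.1.mono H.le_closure, eq_top_iff.2 ?_⟩
    rw [← hmax.topologicalClosure_rangeOneSub]
    exact Submodule.topologicalClosure_minimal _ hc.rangeOneSub_closure_le
      (Submodule.isClosed_topologicalClosure _)
end

section
/- Let X be a complex Hilbert space, (Xₙ) an increasing sequence of closed subspaces of X with ⋃ₙ Xₙ dense, Pₙ the orthogonal projection onto Xₙ and Qₙ = 1 − Pₙ. Let H : D(H) ⊆ X → X be densely defined and linear, and fix n. Assume (A1): the operator x ↦ H*(Pₙx), with domain {x ∈ X : Pₙx ∈ D(H*)}, is densely defined; and (A2): for every x ∈ D(H) and every ε > 0 there exists z ∈ Qₙ[D(H)] with ‖z‖ ≤ ε, Pₙx + z ∈ D(H) and Pₙ(H(Pₙx + z) − Hx) = 0. Then the operator Hₙ : Pₙ[D(H)] ⊆ Xₙ → Xₙ defined by Hₙ(Pₙx) := Pₙ(Hx) for x ∈ D(H) is well-defined (i.e., Pₙx = Pₙy for x, y ∈ D(H) implies PₙHx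 = PₙHy), and Hₙ is densely defined in Xₙ. -/
/-!
The hypotheses make `Pₙ` the orthogonal projection onto `Xₙ`, so it is symmetric and fixes `Xₙ`.

Well-definedness: for `u = x - y` we have `Pₙ u = 0`, so (A2) provides `z ∈ D(H)` of norm at
most `ε` with `Pₙ (H z) = Pₙ (H u)`. For every `v` with `Pₙ v ∈ D(H*)`,
`⟪v, Pₙ (H u)⟫ = ⟪Pₙ v, H z⟫ = ⟪H* (Pₙ v), z⟫`, which is at most `‖H* (Pₙ v)‖ ε` in norm,
hence zero; by (A1) such `v` are dense, so `Pₙ (H u) = 0`.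

Density: `Xₙ` is the range of the continuous map `Pₙ`, and the image of the dense set `D(H)`
is dense in the range.
-/

open scoped InnerProductSpace

variable {X : Type*} [NormedAddCommGroup X] [InnerProductSpace ℂ X] [CompleteSpace X]

open Filter Topology

section

variable {𝕜 E : Type*} [RCLike 𝕜] [NormedAddCommGroup E] [InnerProductSpace 𝕜 E]

theorem Submodule.starProjection_eq_of_mem_orthogonal {K : Submodule 𝕜 E}
    [K.HasOrthogonalProjection] {P : E →L[𝕜] E} (hmem : ∀ x, P x ∈ K)
    (hortho : ∀ x, x - P x ∈ Kᗮ) : K.starProjection = P :=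
  ContinuousLinearMap.ext fun x => K.eq_starProjection_of_mem_orthogonal (hmem x) (hortho x)

theorem eq_zero_of_forall_norm_le_mul {F : Type*} [NormedAddCommGroup F] {a : F} {C : ℝ}
    (h : ∀ ε > 0, ‖a‖ ≤ C * ε) : a = 0 := by
  have hlim : Tendsto (fun ε => C * ε) (𝓝[>] 0) (𝓝 0) := by
    simpa using ((continuous_const_mul C).tendsto 0).mono_left nhdsWithin_le_nhds
  exact norm_le_zero_iff.1 <| ge_of_tendsto hlim (eventually_nhdsWithin_of_forall h)

variable [CompleteSpace E] {H : E →ₗ.[𝕜] E} {P : E →L[𝕜] E} {u : H.domain}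

namespace LinearPMap

theorem inner_map_apply_eq_zero_of_forall_small (hH : Dense (H.domain : Set E))
    (hP : (P : E →ₗ[𝕜] E).IsSymmetric)
    (hu : ∀ ε > 0, ∃ z : H.domain, ‖(z : E)‖ ≤ ε ∧ P (H z) = P (H u))
    {v : E} (hv : P v ∈ H†.domain) : ⟪v, P (H u)⟫_𝕜 = 0 := by
  refine eq_zero_of_forall_norm_le_mul (C := ‖H† ⟨P v, hv⟩‖) fun ε hε => ?_
  obtain ⟨z, hz, hPz⟩ := hu ε hε
  calc ‖⟪v, P (H u)⟫_𝕜‖ = ‖⟪H† ⟨P v, hv⟩, (z : E)⟫_𝕜‖ := by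
        rw [← hPz, adjoint_isFormalAdjoint hH ⟨P v, hv⟩ z]
        exact congrArg norm (hP v (H z)).symm
    _ ≤ ‖H† ⟨P v, hv⟩‖ * ‖(z : E)‖ := norm_inner_le_norm _ _
    _ ≤ ‖H† ⟨P v, hv⟩‖ * ε := by gcongr

theorem map_apply_eq_zero_of_forall_small (hH : Dense (H.domain : Set E))
    (hP : (P : E →ₗ[𝕜] E).IsSymmetric) (hdense : Dense {x | P x ∈ H†.domain})
    (hu : ∀ ε > 0, ∃ z : H.domain, ‖(z : E)‖ ≤ ε ∧ P (H z) = P (H u)) : P (H u) = 0 :=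
  hdense.eq_zero_of_inner_right 𝕜 fun _ hv => inner_map_apply_eq_zero_of_forall_small hH hP hu hv

end LinearPMap

end

theorem stmt_17_general (Xn : ℕ → Submodule ℂ X)
    (P Q : ℕ → X →L[ℂ] X) (hPmem : ∀ m x, P m x ∈ Xn m)
    (hPortho : ∀ m x, x - P m x ∈ (Xn m)ᗮ)
    (H : X →ₗ.[ℂ] X) (hdense : Dense (H.domain : Set X))
    (n : ℕ)
    (hA1 : Dense {x : X | P n x ∈ H.adjoint.domain})
    (hA2 : ∀ (x : H.domain) (ε : ℝ), 0 < ε → ∃ w : H.domain,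
      ‖Q n (w : X)‖ ≤ ε ∧ ∃ hz : P n (x : X) + Q n (w : X) ∈ H.domain,
        P n (H ⟨P n (x : X) + Q n (w : X), hz⟩ - H x) = 0) :
    (∀ x y : H.domain, P n (x : X) = P n (y : X) → P n (H x) = P n (H y)) ∧
      ((Xn n : Set X) ⊆ closure {v : X | ∃ x : H.domain, P n (x : X) = v}) := by
  have : (Xn n).HasOrthogonalProjection := ⟨fun v => ⟨P n v, hPmem n v, hPortho n v⟩⟩
  have hP : (Xn n).starProjection = P n :=
    Submodule.starProjection_eq_of_mem_orthogonal (hPmem n) (hPortho n)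
  have hsymm : (P n : X →ₗ[ℂ] X).IsSymmetric := hP ▸ (Xn n).starProjection_isSymmetric
  refine ⟨fun x y hxy => ?_, fun v hv => ?_⟩
  · have small : ∀ ε > 0, ∃ z : H.domain, ‖(z : X)‖ ≤ ε ∧ P n (H z) = P n (H (x - y)) := by
      intro ε hε
      obtain ⟨w, hw, hz, hPz⟩ := hA2 (x - y) ε hε
      exact ⟨⟨_, hz⟩, by simpa [hxy] using hw, by rwa [map_sub, sub_eq_zero] at hPz⟩
    have hzero := H.map_apply_eq_zero_of_forall_small hdense hsymm hA1 small
    rwa [H.map_sub, map_sub, sub_eq_zero] at hzero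
  · have hfix : P n v = v := hP ▸ (Xn n).starProjection_eq_self_iff.2 hv
    have hrange := (P n).continuous.range_subset_closure_image_dense hdense
    rw [Set.image_eq_range] at hrange
    exact hrange ⟨v, hfix⟩

/-- Let `(Xₙ)` be an increasing sequence of closed subspaces of a complex
Hilbert space with dense union, `Pₙ` the orthogonal projection onto `Xₙ` and `Qₙ = 1 − Pₙ`,
and `H` densely defined.  Fix `n` and assume
(A1) the operator `x ↦ H* (Pₙ x)` with domain `{x : Pₙ x ∈ D(H*)}` is densely defined; and
(A2) for every `x ∈ D(H)` and `ε > 0` there is `z ∈ Qₙ[D(H)]` with `‖z‖ ≤ ε`,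
`Pₙ x + z ∈ D(H)` and `Pₙ (H (Pₙ x + z) − H x) = 0`.
Then `Hₙ : Pₙ[D(H)] ⊆ Xₙ → Xₙ`, `Hₙ (Pₙ x) := Pₙ (H x)`, is well defined and densely
defined in `Xₙ`. -/
theorem stmt_17 (Xn : ℕ → Submodule ℂ X) (hmono : Monotone Xn)
    (hXnclosed : ∀ m, IsClosed ((Xn m : Submodule ℂ X) : Set X))
    (hUdense : Dense (⋃ m, ((Xn m : Submodule ℂ X) : Set X)))
    (P Q : ℕ → X →L[ℂ] X) (hPmem : ∀ m x, P m x ∈ Xn m)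
    (hPortho : ∀ m x, x - P m x ∈ (Xn m)ᗮ)
    (hQ : ∀ m x, Q m x = x - P m x)
    (H : X →ₗ.[ℂ] X) (hdense : Dense (H.domain : Set X))
    (n : ℕ)
    (hA1 : Dense {x : X | P n x ∈ H.adjoint.domain})
    (hA2 : ∀ (x : H.domain) (ε : ℝ), 0 < ε → ∃ w : H.domain,
      ‖Q n (w : X)‖ ≤ ε ∧ ∃ hz : P n (x : X) + Q n (w : X) ∈ H.domain,
        P n (H ⟨P n (x : X) + Q n (w : X), hz⟩ - H x) = 0) :
    (∀ x y : H.domain, P n (x : X) = P n (y : X) → P n (H x) = P n (H y)) ∧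
      ((Xn n : Set X) ⊆ closure {v : X | ∃ x : H.domain, P n (x : X) = v}) :=
  stmt_17_general Xn P Q hPmem hPortho H hdense n hA1 hA2
end
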